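/- arXiv:1304.5975 — 5 statements merged into one kernel-verified Lean document; each statement's English description precedes it below -/
import Mathlib

section
/- If |f'|^r is s-convex in the second sense on [u,v] for some s ∈ (0,1], then ∫₀¹ |f'(α u + (1-α)(u+v)/2)|^r dα ≤ ((2^(s+1)-1)/(2^s (s+1))) |f'(u)|^r + (1/(2^s (s+1))) |f'(v)|^r. -/
open MeasureTheory intervalIntegral

/-- `g` is s-convex in the second sense on `[u, v]`. -/
def SConvexSecond (s u v : ℝ) (g : ℝ → ℝ) : Prop :=
  ∀ x ∈ Set.Icc u v, ∀ y ∈ Set.Icc u v, ∀ a ∈ Set.Icc (0:ℝ) 1,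
    g (a * x + (1 - a) * y) ≤ a ^ s * g x + (1 - a) ^ s * g y

theorem stmt_4 (f f' : ℝ → ℝ) (u v r s : ℝ) (hu : 0 ≤ u) (huv : u < v)
    (hr : 1 ≤ r) (hs : s ∈ Set.Ioc (0:ℝ) 1)
    (hd : ∀ x ∈ Set.Icc u v, HasDerivAt f (f' x) x)
    (hsc : SConvexSecond s u v (fun x => |f' x| ^ r)) :
    ∫ α in (0:ℝ)..1, |f' (α * u + (1 - α) * ((u + v) / 2))| ^ r
      ≤ ((2 ^ (s + 1) - 1) / (2 ^ s * (s + 1))) * |f' u| ^ r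
        + (1 / (2 ^ s * (s + 1))) * |f' v| ^ r := by
  obtain ⟨hs0, hs1⟩ := hs
  have hgu : (0:ℝ) ≤ |f' u| ^ r := Real.rpow_nonneg (abs_nonneg _) r
  have hgv : (0:ℝ) ≤ |f' v| ^ r := Real.rpow_nonneg (abs_nonneg _) r
  have hsp : (0:ℝ) < s + 1 := by linarith
  have h2s : (0:ℝ) < (2:ℝ) ^ s := Real.rpow_pos_of_pos two_pos s
  have h2s1 : (0:ℝ) < (2:ℝ) ^ (s+1) := Real.rpow_pos_of_pos two_pos (s+1)
  have h2s1' : (1:ℝ) < (2:ℝ) ^ (s+1) := by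
    have := Real.one_lt_rpow_iff_of_pos (x := (2:ℝ)) two_pos (y := s+1)
    rw [this]; left; constructor <;> linarith
  have hRHSpos : 0 ≤ ((2 ^ (s + 1) - 1) / (2 ^ s * (s + 1))) * |f' u| ^ r
        + (1 / (2 ^ s * (s + 1))) * |f' v| ^ r := by
    have h1 : (0:ℝ) ≤ (2 ^ (s + 1) - 1) / (2 ^ s * (s + 1)) :=
      div_nonneg (by linarith) (by positivity)
    have h2 : (0:ℝ) ≤ 1 / ((2:ℝ) ^ s * (s + 1)) := by positivity
    have := mul_nonneg h1 hgu
    have := mul_nonneg h2 hgv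
    linarith
  by_cases hint : IntervalIntegrable
      (fun α => |f' (α * u + (1 - α) * ((u + v) / 2))| ^ r) volume 0 1
  swap
  · rw [intervalIntegral.integral_undef hint]; exact hRHSpos
  -- pointwise bound
  have key : ∀ α ∈ Set.Icc (0:ℝ) 1,
      |f' (α * u + (1 - α) * ((u + v) / 2))| ^ r
        ≤ ((1+α)/2) ^ s * |f' u| ^ r + ((1-α)/2) ^ s * |f' v| ^ r := by
    intro α hα
    obtain ⟨h0, h1⟩ := hα
    have := hsc u ⟨le_refl u, huv.le⟩ v ⟨huv.le, le_refl v⟩ ((1+α)/2)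
      ⟨by linarith, by linarith⟩
    have heq : (1+α)/2 * u + (1 - (1+α)/2) * v = α * u + (1 - α) * ((u + v) / 2) := by
      ring
    have heq2 : (1 : ℝ) - (1+α)/2 = (1-α)/2 := by ring
    rw [heq, heq2] at this
    exact this
  -- continuity/integrability of the upper bounds
  have hc1 : Continuous fun α : ℝ => ((1+α)/2) ^ s := by
    rw [continuous_iff_continuousAt]
    intro x
    exact (Real.continuousAt_rpow_const _ _ (Or.inr hs0.le)).comp (by fun_prop)
  have hc2 : Continuous fun α : ℝ => ((1-α)/2) ^ s := by
    rw [continuous_iff_continuousAt]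
    intro x
    exact (Real.continuousAt_rpow_const _ _ (Or.inr hs0.le)).comp (by fun_prop)
  have hI1 : IntervalIntegrable (fun α : ℝ => ((1+α)/2) ^ s * |f' u| ^ r) volume 0 1 :=
    (hc1.intervalIntegrable 0 1).mul_const _
  have hI2 : IntervalIntegrable (fun α : ℝ => ((1-α)/2) ^ s * |f' v| ^ r) volume 0 1 :=
    (hc2.intervalIntegrable 0 1).mul_const _
  have step1 : ∫ α in (0:ℝ)..1, |f' (α * u + (1 - α) * ((u + v) / 2))| ^ r
      ≤ ∫ α in (0:ℝ)..1,
          (((1+α)/2) ^ s * |f' u| ^ r + ((1-α)/2) ^ s * |f' v| ^ r) :=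
    intervalIntegral.integral_mono_on (by norm_num) hint (hI1.add hI2) key
  -- compute the two integrals
  have hval1 : ∫ α in (0:ℝ)..1, ((1+α)/2) ^ s
      = 2 * ((1:ℝ) - (1/2) ^ (s+1)) / (s+1) := by
    have e1 : ∫ α in (0:ℝ)..1, ((1+α)/2) ^ s
        = ∫ α in (0:ℝ)..1, (fun x : ℝ => (x/2) ^ s) (α + 1) := by
      congr 1; ext α; ring_nf
    rw [e1, intervalIntegral.integral_comp_add_right (fun x : ℝ => (x/2) ^ s) 1,
      intervalIntegral.integral_comp_div (c := 2) (fun x : ℝ => x ^ s) two_ne_zero]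
    norm_num
    rw [integral_rpow (Or.inl (by linarith))]
    rw [Real.one_rpow]
    ring
  have hval2 : ∫ α in (0:ℝ)..1, ((1-α)/2) ^ s
      = 2 * ((1/2:ℝ) ^ (s+1)) / (s+1) := by
    have e1 : ∫ α in (0:ℝ)..1, ((1-α)/2) ^ s
        = ∫ α in (0:ℝ)..1, (fun x : ℝ => (x/2) ^ s) (1 - α) := by
      congr 1
    rw [e1, intervalIntegral.integral_comp_sub_left (fun x : ℝ => (x/2) ^ s) 1,
      intervalIntegral.integral_comp_div (c := 2) (fun x : ℝ => x ^ s) two_ne_zero]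
    norm_num
    rw [integral_rpow (Or.inl (by linarith))]
    rw [Real.zero_rpow (by linarith)]
    ring
  have hsplit : ∫ α in (0:ℝ)..1,
      (((1+α)/2) ^ s * |f' u| ^ r + ((1-α)/2) ^ s * |f' v| ^ r)
      = (∫ α in (0:ℝ)..1, ((1+α)/2) ^ s) * |f' u| ^ r
        + (∫ α in (0:ℝ)..1, ((1-α)/2) ^ s) * |f' v| ^ r := by
    rw [intervalIntegral.integral_add hI1 hI2,
      intervalIntegral.integral_mul_const, intervalIntegral.integral_mul_const]
  rw [hsplit, hval1, hval2] at step1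
  refine step1.trans (le_of_eq ?_)
  have h2add : (2:ℝ) ^ (s+1) = 2 ^ s * 2 := by
    rw [Real.rpow_add two_pos, Real.rpow_one]
  have hhalf : ((1/2:ℝ)) ^ (s+1) = 1 / 2 ^ (s+1) := by
    rw [Real.div_rpow (by norm_num) (by norm_num), Real.one_rpow]
  rw [hhalf, h2add]
  field_simp
end

section
/- Let f : I ⊆ ℝ → ℝ be differentiable on the interior of I, u, v ∈ I with u < v, 0 ≤ λ, μ ≤ 1, f' integrable, and suppose |f'|^r is s-convex in the second sense on [u,v] for some fixed s ∈ (0,1], where p, r > 1 with 1/p + 1/r = 1. Then |(λ f(u) + μ f(v))/2 + ((2-λ-μ)/2) f((u+v)/2) - (1/(v-u)) ∫ᵤᵛ f(x) dx| ≤ ((v-u)/4) (((1-λ)^(p+1) + λ^(p+1))/(p+1))^(1/p) · (((2^(s+1)-1)/(2^s(s+1))) |f'(u)|^r + (1/(2^s(s+1))) |f'(v)|^r)^(1/r) + ((v-u)/4) ((μ^(p+1) + (1-μ)^(p+1))/(p+1))^(1/p) · ((1/(2^s(s+1))) |f'(u)|^r + ((2^(s+1)-1)/(2^s(s+1))) |f'(v)|^r)^(1/r).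 -/
open MeasureTheory intervalIntegral

open Set

/-!
Integrating by parts on the two halves of `[u, v]` against the kernels `x - (u + λ(v - u)/2)` and
`x - (v - μ(v - u)/2)` turns the left-hand side into `(S₁ + S₂) / (v - u)`, where `Sᵢ` is the
integral of the kernel times `f'` over the `i`-th half. Hölder's inequality bounds `|Sᵢ|` by the
`L^p` norm of the kernel, which is explicit, times the `L^r` norm of `f'`. Applied between the
endpoints, s-convexity bounds `|f' x| ^ r` by `((v - x)/(v - u)) ^ s |f' u| ^ r +
((x - u)/(v - u)) ^ s |f' v| ^ r`, and the averages of this majorant over the two halves give the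
constants `(2 ^ (s + 1) - 1) / (2 ^ s (s + 1))` and `1 / (2 ^ s (s + 1))`.
-/

theorem integral_abs_sub_rpow {a b c p : ℝ} (hc : c ∈ Icc a b) (hp : 0 ≤ p) :
    ∫ x in a..b, |x - c| ^ p = ((c - a) ^ (p + 1) + (b - c) ^ (p + 1)) / (p + 1) := by
  have hcont : Continuous fun x : ℝ => |x - c| ^ p := by fun_prop (disch := exact hp)
  have hleft : ∫ x in a..c, |x - c| ^ p = ∫ x in a..c, (c - x) ^ p :=
    integral_congr fun x hx => by
      rw [uIcc_of_le hc.1] at hx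
      simp only [abs_sub_comm x c, abs_of_nonneg (sub_nonneg.2 hx.2)]
  have hright : ∫ x in c..b, |x - c| ^ p = ∫ x in c..b, (x - c) ^ p :=
    integral_congr fun x hx => by
      rw [uIcc_of_le hc.2] at hx
      simp only [abs_of_nonneg (sub_nonneg.2 hx.1)]
  have hp1 : p + 1 ≠ 0 := by linarith
  rw [← integral_add_adjacent_intervals (hcont.intervalIntegrable a c)
    (hcont.intervalIntegrable c b), hleft, hright, integral_comp_sub_left (· ^ p),
    integral_comp_sub_right (· ^ p), sub_self, integral_rpow (Or.inl (by linarith)),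
    integral_rpow (Or.inl (by linarith)), Real.zero_rpow hp1]
  ring

theorem abs_intervalIntegral_mul_le_Lp_mul_Lq {a b p r : ℝ} {h g : ℝ → ℝ} (hab : a ≤ b)
    (hpr : p.HolderConjugate r) (hh : IntervalIntegrable h volume a b)
    (hg : IntervalIntegrable g volume a b)
    (hhp : IntervalIntegrable (fun x => |h x| ^ p) volume a b)
    (hgr : IntervalIntegrable (fun x => |g x| ^ r) volume a b) :
    |∫ x in a..b, h x * g x| ≤
      (∫ x in a..b, |h x| ^ p) ^ (1 / p) * (∫ x in a..b, |g x| ^ r) ^ (1 / r) := by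
  have hmem {k : ℝ → ℝ} {q : ℝ} (hq : 0 < q) (hk : IntervalIntegrable k volume a b)
      (hkq : IntervalIntegrable (fun x => |k x| ^ q) volume a b) :
      MemLp k (ENNReal.ofReal q) (volume.restrict (Ioc a b)) := by
    rw [← integrable_norm_rpow_iff hk.1.aestronglyMeasurable (by simpa using hq) (by simp),
      ENNReal.toReal_ofReal hq.le]
    exact hkq.1
  calc |∫ x in a..b, h x * g x| ≤ ∫ x in a..b, |h x| * |g x| := by
        simpa only [abs_mul] using abs_integral_le_integral_abs (f := fun x => h x * g x) hab
    _ ≤ _ := by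
        simp only [integral_of_le hab]
        exact integral_mul_norm_le_Lp_mul_Lq hpr (hmem hpr.pos hh hhp) (hmem hpr.symm.pos hg hgr)

theorem rpow_scaling_of_holderConjugate {d K A p r : ℝ} (hd : 0 < d) (hK : 0 ≤ K) (hA : 0 ≤ A)
    (hpr : p.HolderConjugate r) :
    (d ^ (p + 1) * K) ^ (1 / p) * (d * A) ^ (1 / r) = d ^ 2 * K ^ (1 / p) * A ^ (1 / r) := by
  have hexp : (p + 1) * (1 / p) + 1 / r = 2 := by
    have := hpr.inv_add_inv_eq_one
    field_simp [hpr.ne_zero, hpr.symm.ne_zero] at this ⊢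
    linarith
  have hd2 : d ^ ((p + 1) * (1 / p)) * d ^ (1 / r) = d ^ 2 := by
    rw [← Real.rpow_add hd, hexp, Real.rpow_two]
  rw [Real.mul_rpow (by positivity) hK, Real.mul_rpow hd.le hA, ← Real.rpow_mul hd.le, ← hd2]
  ring

theorem abs_integral_sub_mul_le {a b t p r : ℝ} {g φ : ℝ → ℝ} (hab : a < b) (ht : t ∈ Icc (0:ℝ) 1)
    (hpr : p.HolderConjugate r) (hg : IntervalIntegrable g volume a b)
    (hφ : IntervalIntegrable φ volume a b) (hgφ : ∀ x ∈ Icc a b, |g x| ^ r ≤ φ x) :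
    |∫ x in a..b, (x - (a + t * (b - a))) * g x| ≤
      (b - a) ^ 2 * (((1 - t) ^ (p + 1) + t ^ (p + 1)) / (p + 1)) ^ (1 / p) *
        ((b - a)⁻¹ * ∫ x in a..b, φ x) ^ (1 / r) := by
  obtain ⟨ht0, ht1⟩ := ht
  have hd : 0 < b - a := sub_pos.2 hab
  have hp : 0 < p := hpr.pos
  have hgφ' : ∀ᵐ x ∂volume.restrict (Ioc a b), ‖|g x| ^ r‖ ≤ φ x :=
    (ae_restrict_iff' measurableSet_Ioc).2 (.of_forall fun x hx => by
      rw [Real.norm_of_nonneg (by positivity)]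
      exact hgφ x (Ioc_subset_Icc_self hx))
  have hgr : IntervalIntegrable (fun x => |g x| ^ r) volume a b := by
    rw [intervalIntegrable_iff_integrableOn_Ioc_of_le hab.le]
    exact hφ.1.mono' ((Real.continuous_rpow_const hpr.symm.nonneg).comp_aestronglyMeasurable
      hg.1.aestronglyMeasurable.norm) hgφ'
  have hkernel : Continuous fun x => |x - (a + t * (b - a))| ^ p := by
    fun_prop (disch := exact hp.le)
  have hkernel_eq : ∫ x in a..b, |x - (a + t * (b - a))| ^ p =
      (b - a) ^ (p + 1) * (((1 - t) ^ (p + 1) + t ^ (p + 1)) / (p + 1)) := by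
    rw [integral_abs_sub_rpow ⟨by nlinarith, by nlinarith⟩ hp.le,
      show a + t * (b - a) - a = t * (b - a) by ring,
      show b - (a + t * (b - a)) = (1 - t) * (b - a) by ring,
      Real.mul_rpow ht0 hd.le, Real.mul_rpow (by linarith) hd.le]
    ring
  have hφ_int : ∫ x in a..b, |g x| ^ r ≤ ∫ x in a..b, φ x :=
    integral_mono_on hab.le hgr hφ hgφ
  have hg_int : 0 ≤ ∫ x in a..b, |g x| ^ r :=
    integral_nonneg hab.le fun x _ => by positivity
  calc |∫ x in a..b, (x - (a + t * (b - a))) * g x|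
      ≤ (∫ x in a..b, |x - (a + t * (b - a))| ^ p) ^ (1 / p) *
          (∫ x in a..b, |g x| ^ r) ^ (1 / r) :=
        abs_intervalIntegral_mul_le_Lp_mul_Lq hab.le hpr
          ((continuous_sub_right _).intervalIntegrable a b) hg
          (hkernel.intervalIntegrable a b) hgr
    _ ≤ ((b - a) ^ (p + 1) * (((1 - t) ^ (p + 1) + t ^ (p + 1)) / (p + 1))) ^ (1 / p) *
          ((b - a) * ((b - a)⁻¹ * ∫ x in a..b, φ x)) ^ (1 / r) := by
        rw [hkernel_eq, mul_inv_cancel_left₀ hd.ne']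
        gcongr
        exact hpr.symm.one_div_nonneg
    _ = _ := rpow_scaling_of_holderConjugate hd (by positivity)
          (mul_nonneg (inv_nonneg.2 hd.le) (hg_int.trans hφ_int)) hpr

theorem integral_sub_mul_eq_sub_integral {f f' : ℝ → ℝ} {a b c : ℝ}
    (hd : ∀ x ∈ uIcc a b, HasDerivAt f (f' x) x) (hint : IntervalIntegrable f' volume a b) :
    ∫ x in a..b, (x - c) * f' x = (b - c) * f b - (a - c) * f a - ∫ x in a..b, f x := by
  simpa using integral_mul_deriv_eq_deriv_mul (fun x _ => (hasDerivAt_id x).sub_const c) hd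
    intervalIntegrable_const hint

theorem weighted_midpoint_sub_average_eq {f f' : ℝ → ℝ} {u v l m : ℝ} (huv : u < v)
    (hd : ∀ x ∈ Icc u v, HasDerivAt f (f' x) x) (hint : IntervalIntegrable f' volume u v) :
    (l * f u + m * f v) / 2 + ((2 - l - m) / 2) * f ((u + v) / 2)
        - (1 / (v - u)) * ∫ x in u..v, f x =
      ((∫ x in u..(u + v) / 2, (x - (u + l * (v - u) / 2)) * f' x) +
          ∫ x in (u + v) / 2..v, (x - (v - m * (v - u) / 2)) * f' x) / (v - u) := by
  rw [← uIcc_of_le huv.le] at hd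
  have hw : (u + v) / 2 ∈ uIcc u v := by
    rw [uIcc_of_le huv.le]
    constructor <;> linarith
  have hf : ContinuousOn f (uIcc u v) := fun x hx => (hd x hx).continuousAt.continuousWithinAt
  rw [integral_sub_mul_eq_sub_integral (fun x hx => hd x (uIcc_subset_uIcc_left hw hx))
      (hint.mono_set (uIcc_subset_uIcc_left hw)),
    integral_sub_mul_eq_sub_integral (fun x hx => hd x (uIcc_subset_uIcc_right hw hx))
      (hint.mono_set (uIcc_subset_uIcc_right hw)),
    ← integral_add_adjacent_intervals
      ((hf.mono (uIcc_subset_uIcc_left hw)).intervalIntegrable)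
      ((hf.mono (uIcc_subset_uIcc_right hw)).intervalIntegrable)]
  field_simp [sub_ne_zero.2 huv.ne']
  ring

theorem SConvexSecond.le_of_mem_Icc {s u v x : ℝ} {g : ℝ → ℝ} (hg : SConvexSecond s u v g)
    (huv : u < v) (hx : x ∈ Icc u v) :
    g x ≤ ((x - v) / (u - v)) ^ s * g u + ((x - u) / (v - u)) ^ s * g v := by
  have hvu : v - u ≠ 0 := sub_ne_zero.2 huv.ne'
  have huv' : u - v ≠ 0 := sub_ne_zero.2 huv.ne
  have hcompl : 1 - (x - u) / (v - u) = (x - v) / (u - v) := by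
    field_simp
    ring
  have hcomb : (x - u) / (v - u) * v + (1 - (x - u) / (v - u)) * u = x := by
    field_simp
    ring
  have := hg v ⟨huv.le, le_rfl⟩ u ⟨le_rfl, huv.le⟩ ((x - u) / (v - u))
    ⟨div_nonneg (by linarith [hx.1]) (by linarith),
      (div_le_one (by linarith)).2 (by linarith [hx.2])⟩
  rw [hcomb, hcompl] at this
  linarith

theorem integral_div_sub_rpow {a b u v s : ℝ} (huv : u ≠ v) (hs : -1 < s) :
    ∫ x in a..b, ((x - u) / (v - u)) ^ s =
      (v - u) * ((((b - u) / (v - u)) ^ (s + 1) - ((a - u) / (v - u)) ^ (s + 1)) / (s + 1)) := by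
  have hvu : v - u ≠ 0 := sub_ne_zero.2 huv.symm
  simp only [sub_div _ u]
  rw [integral_comp_div_sub (· ^ s) hvu, integral_rpow (Or.inl hs), smul_eq_mul]

theorem integral_sConvex_majorant_lower_half {u v s : ℝ} (huv : u ≠ v) (hs : 0 ≤ s) (A B : ℝ) :
    ((u + v) / 2 - u)⁻¹ * ∫ x in u..(u + v) / 2, (((x - v) / (u - v)) ^ s * A +
        ((x - u) / (v - u)) ^ s * B) =
      (2 ^ (s + 1) - 1) / (2 ^ s * (s + 1)) * A + 1 / (2 ^ s * (s + 1)) * B := by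
  have huv' : u - v ≠ 0 := sub_ne_zero.2 huv
  have hint (c d C : ℝ) :
      IntervalIntegrable (fun x => ((x - c) / d) ^ s * C) volume u ((u + v) / 2) :=
    (by fun_prop (disch := exact hs) : Continuous _).intervalIntegrable _ _
  rw [integral_add (hint _ _ _) (hint _ _ _),
    intervalIntegral.integral_mul_const, intervalIntegral.integral_mul_const,
    integral_div_sub_rpow huv.symm (by linarith),
    integral_div_sub_rpow huv (by linarith)]
  have e1 : ((u + v) / 2 - u) / (v - u) = 1 / 2 := by field_simp; ring
  have e2 : ((u + v) / 2 - v) / (u - v) = 1 / 2 := by field_simp; ring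
  have h2s : (2 : ℝ) ^ (s + 1) = 2 ^ s * 2 := Real.rpow_add_one two_ne_zero s
  have h2s' : (1 / 2 : ℝ) ^ (s + 1) = 1 / (2 ^ s * 2) := by
    rw [Real.div_rpow zero_le_one zero_le_two, Real.one_rpow, h2s]
  rw [e1, e2, sub_self, zero_div, div_self huv', Real.zero_rpow (by linarith),
    Real.one_rpow, h2s', h2s, show (u + v) / 2 - u = (v - u) / 2 by ring]
  field_simp
  ring

theorem integral_sConvex_majorant_upper_half {u v s : ℝ} (huv : u ≠ v) (hs : 0 ≤ s) (A B : ℝ) :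
    (v - (u + v) / 2)⁻¹ * ∫ x in (u + v) / 2..v, (((x - v) / (u - v)) ^ s * A +
        ((x - u) / (v - u)) ^ s * B) =
      1 / (2 ^ s * (s + 1)) * A + (2 ^ (s + 1) - 1) / (2 ^ s * (s + 1)) * B := by
  have := integral_sConvex_majorant_lower_half huv.symm hs B A
  rw [add_comm v u, integral_symm, ← neg_sub, inv_neg, neg_mul_neg] at this
  convert this using 1
  · congr 1
    exact integral_congr fun x _ => add_comm _ _
  · ring

theorem stmt_5_general (f f' : ℝ → ℝ) (u v l m p r s : ℝ) (huv : u < v)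
    (hl : l ∈ Set.Icc (0:ℝ) 1) (hm : m ∈ Set.Icc (0:ℝ) 1)
    (hs : s ∈ Set.Ioc (0:ℝ) 1) (hp : 1 < p) (hpr : 1 / p + 1 / r = 1)
    (hd : ∀ x ∈ Set.Icc u v, HasDerivAt f (f' x) x)
    (hint : IntervalIntegrable f' volume u v)
    (hsc : SConvexSecond s u v (fun x => |f' x| ^ r)) :
    |(l * f u + m * f v) / 2 + ((2 - l - m) / 2) * f ((u + v) / 2)
        - (1 / (v - u)) * ∫ x in u..v, f x|
      ≤ ((v - u) / 4) * (((1 - l) ^ (p + 1) + l ^ (p + 1)) / (p + 1)) ^ (1 / p) *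
          (((2 ^ (s + 1) - 1) / (2 ^ s * (s + 1))) * |f' u| ^ r
            + (1 / (2 ^ s * (s + 1))) * |f' v| ^ r) ^ (1 / r)
        + ((v - u) / 4) * ((m ^ (p + 1) + (1 - m) ^ (p + 1)) / (p + 1)) ^ (1 / p) *
          ((1 / (2 ^ s * (s + 1))) * |f' u| ^ r
            + ((2 ^ (s + 1) - 1) / (2 ^ s * (s + 1))) * |f' v| ^ r) ^ (1 / r) := by
  have hpr' : p.HolderConjugate r :=
    Real.holderConjugate_iff.2 ⟨hp, by simpa only [one_div] using hpr⟩
  have huw : u < (u + v) / 2 := by linarith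
  have hwv : (u + v) / 2 < v := by linarith
  set w := (u + v) / 2
  have hw : w ∈ uIcc u v := by
    rw [uIcc_of_le huv.le]
    exact ⟨huw.le, hwv.le⟩
  set φ := fun x => ((x - v) / (u - v)) ^ s * |f' u| ^ r + ((x - u) / (v - u)) ^ s * |f' v| ^ r
  have hφ : Continuous φ := by fun_prop (disch := exact hs.1.le)
  have hf'φ : ∀ x ∈ Icc u v, |f' x| ^ r ≤ φ x := fun x hx => hsc.le_of_mem_Icc huv hx
  have h₁ := abs_integral_sub_mul_le huw hl hpr' (hint.mono_set (uIcc_subset_uIcc_left hw))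
    (hφ.intervalIntegrable u w) fun x hx => hf'φ x (Icc_subset_Icc_right hwv.le hx)
  have h₂ := abs_integral_sub_mul_le hwv ⟨sub_nonneg.2 hm.2, sub_le_self _ hm.1⟩ hpr'
    (hint.mono_set (uIcc_subset_uIcc_right hw)) (hφ.intervalIntegrable w v)
    fun x hx => hf'φ x (Icc_subset_Icc_left huw.le hx)
  have hwu : w - u = (v - u) / 2 := by ring
  have hvw : v - w = (v - u) / 2 := by ring
  rw [integral_sConvex_majorant_lower_half huv.ne hs.1.le, hwu, ← mul_div_assoc] at h₁
  rw [integral_sConvex_majorant_upper_half huv.ne hs.1.le, sub_sub_cancel, hvw,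
    show w + (1 - m) * ((v - u) / 2) = v - m * (v - u) / 2 by ring] at h₂
  rw [weighted_midpoint_sub_average_eq huv hd hint, abs_div, abs_of_pos (sub_pos.2 huv)]
  refine (div_le_div_of_nonneg_right ((abs_add_le _ _).trans (add_le_add h₁ h₂))
    (sub_pos.2 huv).le).trans_eq ?_
  field_simp
  ring

theorem stmt_5 (f f' : ℝ → ℝ) (u v l m p r s : ℝ) (hu : 0 ≤ u) (huv : u < v)
    (hl : l ∈ Set.Icc (0:ℝ) 1) (hm : m ∈ Set.Icc (0:ℝ) 1)
    (hs : s ∈ Set.Ioc (0:ℝ) 1) (hp : 1 < p) (hr : 1 < r) (hpr : 1 / p + 1 / r = 1)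
    (hd : ∀ x ∈ Set.Icc u v, HasDerivAt f (f' x) x)
    (hint : IntervalIntegrable f' volume u v)
    (hsc : SConvexSecond s u v (fun x => |f' x| ^ r)) :
    |(l * f u + m * f v) / 2 + ((2 - l - m) / 2) * f ((u + v) / 2)
        - (1 / (v - u)) * ∫ x in u..v, f x|
      ≤ ((v - u) / 4) * (((1 - l) ^ (p + 1) + l ^ (p + 1)) / (p + 1)) ^ (1 / p) *
          (((2 ^ (s + 1) - 1) / (2 ^ s * (s + 1))) * |f' u| ^ r
            + (1 / (2 ^ s * (s + 1))) * |f' v| ^ r) ^ (1 / r)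
        + ((v - u) / 4) * ((m ^ (p + 1) + (1 - m) ^ (p + 1)) / (p + 1)) ^ (1 / p) *
          ((1 / (2 ^ s * (s + 1))) * |f' u| ^ r
            + ((2 ^ (s + 1) - 1) / (2 ^ s * (s + 1))) * |f' v| ^ r) ^ (1 / r) :=
  stmt_5_general f f' u v l m p r s huv hl hm hs hp hpr hd hint hsc
end

section
/- Let f be differentiable on an interval containing [u,v], u < v, with f' integrable, and suppose |f'|^r is s-convex in the second sense on [u,v] for some s ∈ (0,1], where p, r > 1, 1/p + 1/r = 1. Then |(1/2)[(f(u)+f(v))/2 + f((u+v)/2)] - (1/(v-u)) ∫ᵤᵛ f(x) dx| with s = 1 satisfies: it is at most ((v-u)/(8(p+1)^(1/p) 4^(1/r))) · [(3|f'(u)|^r + |f'(v)|^r)^(1/r) + (|f'(u)|^r + 3|f'(v)|^r)^(1/r)], when |f'|^r is convex on [u,v]. -/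
open MeasureTheory intervalIntegral

/-!
Write `m = (u + v) / 2`. Integrating by parts against `x - c` on each half of `[u, v]`, with
`c` the midpoint of that half, turns `(v - u)` times the left-hand side into `∫ (x - c) f' x`
summed over the two halves. On each half, Hölder's inequality bounds this integral by
`(∫ |x - c| ^ p) ^ (1 / p) * (∫ |f'| ^ r) ^ (1 / r)`. Since `|f'| ^ r` is convex, it lies below
its chord on `[u, v]`, whose integrals over `[u, m]` and `[m, v]` are
`(v - u) / 8 * (3 |f' u| ^ r + |f' v| ^ r)` and `(v - u) / 8 * (|f' u| ^ r + 3 |f' v| ^ r)`.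
-/

section

open Set Real

theorem ContinuousOn.memLp_restrict_Icc {g : ℝ → ℝ} {c d : ℝ}
    (hg : ContinuousOn g (Icc c d)) (q : ENNReal) : MemLp g q (volume.restrict (Icc c d)) := by
  obtain ⟨C, hC⟩ := isCompact_Icc.exists_bound_of_continuousOn hg
  exact .of_bound (hg.aestronglyMeasurable measurableSet_Icc) C
    (ae_restrict_of_forall_mem measurableSet_Icc hC)

theorem intervalIntegral.integral_mul_le_Lp_mul_Lq_of_nonneg {p q c d : ℝ}
    (hpq : p.HolderConjugate q) (hcd : c ≤ d) {φ ψ : ℝ → ℝ}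
    (hφ : ContinuousOn φ (Icc c d)) (hψ : ContinuousOn ψ (Icc c d))
    (hφ0 : ∀ x ∈ Icc c d, 0 ≤ φ x) (hψ0 : ∀ x ∈ Icc c d, 0 ≤ ψ x) :
    ∫ x in c..d, φ x * ψ x
      ≤ (∫ x in c..d, φ x ^ p) ^ (1 / p) * (∫ x in c..d, ψ x ^ q) ^ (1 / q) := by
  simp only [integral_of_le hcd, ← integral_Icc_eq_integral_Ioc]
  exact MeasureTheory.integral_mul_le_Lp_mul_Lq_of_nonneg hpq
    (ae_restrict_of_forall_mem measurableSet_Icc hφ0)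
    (ae_restrict_of_forall_mem measurableSet_Icc hψ0)
    (hφ.memLp_restrict_Icc _) (hψ.memLp_restrict_Icc _)

theorem integral_abs_sub_midpoint_rpow {p : ℝ} (hp : 0 ≤ p) {c d : ℝ} (hcd : c ≤ d) :
    ∫ x in c..d, |x - (c + d) / 2| ^ p = 2 * ((d - c) / 2) ^ (p + 1) / (p + 1) := by
  set h := (d - c) / 2
  have hcont : Continuous fun x : ℝ => |x| ^ p := by fun_prop (disch := exact Or.inr hp)
  have hsymm : ∫ x in -h..0, |x| ^ p = ∫ x in 0..h, |x| ^ p := by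
    simpa using (integral_comp_neg (a := 0) (b := h) (fun x => |x| ^ p)).symm
  have habs : ∫ x in 0..h, |x| ^ p = ∫ x in 0..h, x ^ p :=
    integral_congr fun x hx => by
      rw [uIcc_of_le (by positivity)] at hx
      simp only [abs_of_nonneg hx.1]
  rw [integral_comp_sub_right (fun x => |x| ^ p), show c - (c + d) / 2 = -h by ring,
    show d - (c + d) / 2 = h by ring,
    ← integral_add_adjacent_intervals (hcont.intervalIntegrable _ 0)
      (hcont.intervalIntegrable 0 _),
    hsymm, habs, integral_rpow (Or.inl (by linarith)), zero_rpow (by positivity)]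
  ring

theorem abs_integral_sub_midpoint_mul_le {p r c d : ℝ} (hpr : p.HolderConjugate r) (hcd : c ≤ d)
    {g L : ℝ → ℝ} (hg : IntervalIntegrable g volume c d) (hL : ContinuousOn L (Icc c d))
    (hgL : ∀ x ∈ Icc c d, |g x| ^ r ≤ L x) :
    |∫ x in c..d, (x - (c + d) / 2) * g x|
      ≤ (2 * ((d - c) / 2) ^ (p + 1) / (p + 1)) ^ (1 / p) * (∫ x in c..d, L x) ^ (1 / r) := by
  -- Hölder is applied to the continuous majorant `L ^ (1 / r)` of `|g|`, so no integrability
  -- of `|g| ^ r` is needed.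
  have hL0 : ∀ x ∈ Icc c d, 0 ≤ L x := fun x hx =>
    (rpow_nonneg (abs_nonneg _) _).trans (hgL x hx)
  have hgw : ∀ x ∈ Icc c d, |g x| ≤ L x ^ (1 / r) := fun x hx =>
    calc |g x| = (|g x| ^ r) ^ (1 / r) := by
          rw [one_div, rpow_rpow_inv (abs_nonneg _) hpr.symm.ne_zero]
      _ ≤ L x ^ (1 / r) := rpow_le_rpow (by positivity) (hgL x hx) hpr.symm.one_div_nonneg
  have hwr : ∀ x ∈ uIcc c d, (L x ^ (1 / r)) ^ r = L x := fun x hx => by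
    rw [uIcc_of_le hcd] at hx
    rw [one_div, rpow_inv_rpow (hL0 x hx) hpr.symm.ne_zero]
  have hmid : Continuous fun x : ℝ => |x - (c + d) / 2| := by fun_prop
  have hw : ContinuousOn (fun x => L x ^ (1 / r)) (Icc c d) :=
    hL.rpow_const fun _ _ => Or.inr hpr.symm.one_div_nonneg
  calc |∫ x in c..d, (x - (c + d) / 2) * g x|
      ≤ ∫ x in c..d, |x - (c + d) / 2| * |g x| := by
        exact (abs_integral_le_integral_abs hcd).trans_eq (by simp only [abs_mul])
    _ ≤ ∫ x in c..d, |x - (c + d) / 2| * L x ^ (1 / r) := by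
        refine integral_mono_on hcd (hg.abs.continuousOn_mul hmid.continuousOn) ?_
          fun x hx => mul_le_mul_of_nonneg_left (hgw x hx) (abs_nonneg _)
        rw [← uIcc_of_le hcd] at hw
        exact (hmid.continuousOn.mul hw).intervalIntegrable
    _ ≤ (∫ x in c..d, |x - (c + d) / 2| ^ p) ^ (1 / p)
          * (∫ x in c..d, (L x ^ (1 / r)) ^ r) ^ (1 / r) :=
        intervalIntegral.integral_mul_le_Lp_mul_Lq_of_nonneg hpr hcd hmid.continuousOn hw
          (fun _ _ => abs_nonneg _) fun x hx => rpow_nonneg (hL0 x hx) _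
    _ = _ := by rw [integral_abs_sub_midpoint_rpow hpr.nonneg hcd, integral_congr hwr]

theorem ConvexOn.le_chord {g : ℝ → ℝ} {a b x : ℝ} (hg : ConvexOn ℝ (Icc a b) g)
    (hab : a < b) (hx : x ∈ Icc a b) : g x ≤ ((b - x) * g a + (x - a) * g b) / (b - a) := by
  have hba : 0 < b - a := sub_pos.2 hab
  have key := hg.2 (left_mem_Icc.2 hab.le) (right_mem_Icc.2 hab.le)
    (div_nonneg (sub_nonneg.2 hx.2) hba.le) (div_nonneg (sub_nonneg.2 hx.1) hba.le)
    (by field_simp; ring)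
  have hx' : ((b - x) / (b - a)) • a + ((x - a) / (b - a)) • b = x := by
    simp only [smul_eq_mul]; field_simp; ring
  rw [hx'] at key
  refine key.trans_eq ?_
  simp only [smul_eq_mul]
  ring

theorem integral_chord (a b u v c d : ℝ) :
    ∫ x in c..d, ((v - x) * a + (x - u) * b) / (v - u)
      = (d - c) * ((v - (c + d) / 2) * a + ((c + d) / 2 - u) * b) / (v - u) := by
  have h : (fun x => ((v - x) * a + (x - u) * b) / (v - u))
      = fun x => x * ((b - a) / (v - u)) + (v * a - u * b) / (v - u) := by
    funext x; ring
  rw [h, integral_add (intervalIntegrable_id.mul_const _) intervalIntegrable_const,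
    intervalIntegral.integral_mul_const, integral_id, intervalIntegral.integral_const, smul_eq_mul]
  ring

theorem integral_chord_left_half {u v : ℝ} (huv : u ≠ v) (a b : ℝ) :
    ∫ x in u..(u + v) / 2, ((v - x) * a + (x - u) * b) / (v - u) = (v - u) / 8 * (3 * a + b) := by
  rw [integral_chord]
  field_simp [sub_ne_zero.2 huv.symm]
  ring

theorem integral_chord_right_half {u v : ℝ} (huv : u ≠ v) (a b : ℝ) :
    ∫ x in (u + v) / 2..v, ((v - x) * a + (x - u) * b) / (v - u) = (v - u) / 8 * (a + 3 * b) := by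
  rw [integral_chord]
  field_simp [sub_ne_zero.2 huv.symm]
  ring

theorem integral_sub_midpoint_mul_deriv {f f' : ℝ → ℝ} {c d : ℝ}
    (hf : ∀ x ∈ uIcc c d, HasDerivAt f (f' x) x) (hf' : IntervalIntegrable f' volume c d) :
    ∫ x in c..d, (x - (c + d) / 2) * f' x = (d - c) / 2 * (f c + f d) - ∫ x in c..d, f x := by
  have := integral_mul_deriv_eq_deriv_mul (u' := fun _ => 1)
    (fun x _ => (hasDerivAt_id x).sub_const ((c + d) / 2)) hf intervalIntegrable_const hf'
  simp only [one_mul, id] at this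
  rw [this]
  ring

theorem bullen_sub_average_eq {f f' : ℝ → ℝ} {u v : ℝ} (huv : u ≠ v)
    (hf : ∀ x ∈ uIcc u v, HasDerivAt f (f' x) x) (hf' : IntervalIntegrable f' volume u v) :
    (1 / 2) * ((f u + f v) / 2 + f ((u + v) / 2)) - (1 / (v - u)) * ∫ x in u..v, f x
      = (1 / (v - u)) * ((∫ x in u..(u + v) / 2, (x - (u + (u + v) / 2) / 2) * f' x)
          + ∫ x in (u + v) / 2..v, (x - ((u + v) / 2 + v) / 2) * f' x) := by
  have hm : (u + v) / 2 ∈ uIcc u v := by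
    rcases le_total u v with h | h
    · exact mem_uIcc.2 (Or.inl ⟨by linarith, by linarith⟩)
    · exact mem_uIcc.2 (Or.inr ⟨by linarith, by linarith⟩)
  have hfc : ContinuousOn f (uIcc u v) := fun x hx => (hf x hx).continuousAt.continuousWithinAt
  have hsub₁ := uIcc_subset_uIcc_left hm
  have hsub₂ := uIcc_subset_uIcc_right hm
  rw [integral_sub_midpoint_mul_deriv (fun x hx => hf x (hsub₁ hx)) (hf'.mono_set hsub₁),
    integral_sub_midpoint_mul_deriv (fun x hx => hf x (hsub₂ hx)) (hf'.mono_set hsub₂),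
    ← integral_add_adjacent_intervals ((hfc.mono hsub₁).intervalIntegrable)
      ((hfc.mono hsub₂).intervalIntegrable)]
  field_simp [sub_ne_zero.2 huv.symm]
  ring

theorem holder_const_eq {p r h : ℝ} (hpr : p.HolderConjugate r) (hh : 0 < h) :
    1 / h * ((2 * (h / 4) ^ (p + 1) / (p + 1)) ^ (1 / p) * (h / 8) ^ (1 / r))
      = h / (8 * (p + 1) ^ (1 / p) * 4 ^ (1 / r)) := by
  have hp1 : 0 < p + 1 := by linarith [hpr.pos]
  have hK : 0 < 2 * (h / 4) ^ (p + 1) / (p + 1) := by positivity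
  -- After taking logarithms, `1 / p + 1 / r = 1` makes the identity linear in `log h` and `log 2`.
  refine log_injOn_pos (mem_Ioi.2 (by positivity)) (mem_Ioi.2 (by positivity)) ?_
  have l4 : log 4 = 2 * log 2 := by
    rw [show (4 : ℝ) = 2 ^ 2 by norm_num, log_pow]; push_cast; ring
  have l8 : log 8 = 3 * log 2 := by
    rw [show (8 : ℝ) = 2 ^ 3 by norm_num, log_pow]; push_cast; ring
  rw [log_mul (by positivity) (by positivity), log_mul (by positivity) (by positivity),
    log_rpow hK, log_rpow (by positivity), log_div (by positivity) hp1.ne',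
    log_mul two_ne_zero (by positivity), log_rpow (by positivity),
    log_div hh.ne' four_ne_zero, log_div hh.ne' (by norm_num), log_div hh.ne' (by positivity),
    log_mul (by positivity) (by positivity), log_mul (by norm_num) (by positivity),
    log_rpow hp1, log_rpow four_pos, one_div h, log_inv, l4, l8]
  have hsum : r + p = p * r := by
    have := hpr.inv_add_inv_eq_one
    field_simp [hpr.ne_zero, hpr.symm.ne_zero] at this
    linarith
  field_simp [hpr.ne_zero, hpr.symm.ne_zero]
  linear_combination (log h - log 2) * hsum

theorem holder_const_mul_eq {p r h A : ℝ} (hpr : p.HolderConjugate r) (hh : 0 < h)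
    (hA : 0 ≤ A) :
    1 / h * ((2 * (h / 4) ^ (p + 1) / (p + 1)) ^ (1 / p) * (h / 8 * A) ^ (1 / r))
      = h / (8 * (p + 1) ^ (1 / p) * 4 ^ (1 / r)) * A ^ (1 / r) := by
  rw [mul_rpow (by positivity) hA, ← holder_const_eq hpr hh]
  ring

end

theorem stmt_6_general (f f' : ℝ → ℝ) (u v p r : ℝ) (huv : u < v)
    (hp : 1 < p) (hpr : 1 / p + 1 / r = 1)
    (hd : ∀ x ∈ Set.Icc u v, HasDerivAt f (f' x) x)
    (hint : IntervalIntegrable f' volume u v)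
    (hc : ConvexOn ℝ (Set.Icc u v) (fun x => |f' x| ^ r)) :
    |(1 / 2) * ((f u + f v) / 2 + f ((u + v) / 2))
        - (1 / (v - u)) * ∫ x in u..v, f x|
      ≤ ((v - u) / (8 * (p + 1) ^ (1 / p) * 4 ^ (1 / r))) *
          ((3 * |f' u| ^ r + |f' v| ^ r) ^ (1 / r)
            + (|f' u| ^ r + 3 * |f' v| ^ r) ^ (1 / r)) := by
  have hpq : p.HolderConjugate r :=
    Real.holderConjugate_iff.2 ⟨hp, by simpa only [one_div] using hpr⟩
  have hvu : 0 < v - u := sub_pos.2 huv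
  set a := |f' u| ^ r
  set b := |f' v| ^ r
  have hhalf : ∀ c d, u ≤ c → c ≤ d → d ≤ v →
      |∫ x in c..d, (x - (c + d) / 2) * f' x|
        ≤ (2 * ((d - c) / 2) ^ (p + 1) / (p + 1)) ^ (1 / p)
          * (∫ x in c..d, ((v - x) * a + (x - u) * b) / (v - u)) ^ (1 / r) := by
    intro c d huc hcd hdv
    have hsub : Set.uIcc c d ⊆ Set.uIcc u v := by
      rw [Set.uIcc_of_le hcd, Set.uIcc_of_le huv.le]
      exact Set.Icc_subset_Icc huc hdv
    exact abs_integral_sub_midpoint_mul_le hpq hcd (hint.mono_set hsub) (by fun_prop)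
      fun x hx => hc.le_chord huv ⟨huc.trans hx.1, hx.2.trans hdv⟩
  have h₁ := hhalf u ((u + v) / 2) le_rfl (by linarith) (by linarith)
  have h₂ := hhalf ((u + v) / 2) v (by linarith) (by linarith) le_rfl
  rw [integral_chord_left_half huv.ne, show ((u + v) / 2 - u) / 2 = (v - u) / 4 by ring] at h₁
  rw [integral_chord_right_half huv.ne, show (v - (u + v) / 2) / 2 = (v - u) / 4 by ring] at h₂
  rw [bullen_sub_average_eq huv.ne (by rwa [Set.uIcc_of_le huv.le]) hint, abs_mul,
    abs_of_pos (one_div_pos.2 hvu)]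
  calc 1 / (v - u) * |_ + _| ≤ 1 / (v - u) * (_ + _) := by
        gcongr; exact (abs_add_le _ _).trans (add_le_add h₁ h₂)
    _ = _ := by
        rw [mul_add, holder_const_mul_eq hpq hvu (by positivity),
          holder_const_mul_eq hpq hvu (by positivity), mul_add]

theorem stmt_6 (f f' : ℝ → ℝ) (u v p r : ℝ) (huv : u < v)
    (hp : 1 < p) (hr : 1 < r) (hpr : 1 / p + 1 / r = 1)
    (hd : ∀ x ∈ Set.Icc u v, HasDerivAt f (f' x) x)
    (hint : IntervalIntegrable f' volume u v)
    (hc : ConvexOn ℝ (Set.Icc u v) (fun x => |f' x| ^ r)) :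
    |(1 / 2) * ((f u + f v) / 2 + f ((u + v) / 2))
        - (1 / (v - u)) * ∫ x in u..v, f x|
      ≤ ((v - u) / (8 * (p + 1) ^ (1 / p) * 4 ^ (1 / r))) *
          ((3 * |f' u| ^ r + |f' v| ^ r) ^ (1 / r)
            + (|f' u| ^ r + 3 * |f' v| ^ r) ^ (1 / r)) :=
  stmt_6_general f f' u v p r huv hp hpr hd hint hc
end

section
/- Let f be differentiable on an interval containing [u,v] with 0 ≤ u < v, 0 ≤ λ, μ ≤ 1, f' integrable, and |f'|^r s-convex in the second sense on [u,v] for some s ∈ (0,1], with r ≥ 1. Define E = 2(2-λ)^(s+2) + (λ-1)(s + 2^(s+2) + 2) + 2^(s+1) s λ - 1, L = 2λ^(s+2) + s(1-λ) - 2λ + 1, I = 2μ^(s+2) + s(1-μ) - 2μ + 1, F = 2(2-μ)^(s+2) + (μ-1)(s + 2^(s+2) + 2) + 2^(s+1) s μ - 1. Then |(λ f(u) + μ f(v))/2 + ((2-λ-μ)/2) f((u+v)/2) - (1/(v-u)) ∫ᵤᵛ f(x) dx| ≤ ((v-u)/8) (1/(2^(s-1)(s+1)(s+2)))^(1/r)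 · { (2λ²-2λ+1)^(1-1/r) [E |f'(u)|^r + L |f'(v)|^r]^(1/r) + (2μ²-2μ+1)^(1-1/r) [I |f'(u)|^r + F |f'(v)|^r]^(1/r) }. -/
/-!
Integrating by parts on the two halves of `[u, v]` writes the left-hand side as `(v - u) / 4`
times the difference of `∫₀¹ (t - λ) f'(u + t (v - u) / 2) dt` and
`∫₀¹ (t - μ) f'(v - t (v - u) / 2) dt`. Each of these is bounded by the power-mean (Hölder)
inequality with weight `|t - λ|`, and s-convexity bounds `|f'|^r` at the point `u + t (v - u) / 2`
by `(1 - t/2)^s |f'(u)|^r + (t/2)^s |f'(v)|^r`. The constants `E`, `L` (and `F`, `I`) are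
`(s + 1) (s + 2)` times the moments `∫₀¹ |t - λ| (2 - t)^s dt` and `∫₀¹ |t - λ| t^s dt`.
-/

open MeasureTheory intervalIntegral

theorem integral_mul_abs_le_weight_mul_Lp {α : Type*} [MeasurableSpace α] {ν : Measure α}
    {w g : α → ℝ} {r : ℝ} (hr : 1 ≤ r) (hw0 : ∀ x, 0 ≤ w x) (hw : Integrable w ν)
    (hg : AEStronglyMeasurable g ν) (hwg : Integrable (fun x => w x * |g x| ^ r) ν) :
    ∫ x, w x * |g x| ∂ν ≤ (∫ x, w x ∂ν) ^ (1 - 1 / r) * (∫ x, w x * |g x| ^ r ∂ν) ^ (1 / r) := by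
  rcases hr.eq_or_lt with rfl | hr1
  · simp
  set p := r.conjExponent
  have hpq : p.HolderConjugate r := (Real.HolderConjugate.conjExponent hr1).symm
  have hrpow (q : ℝ) (hq : 0 < q) (x : α) : (w x ^ (1 / q)) ^ q = w x := by
    rw [← Real.rpow_mul (hw0 x), one_div_mul_cancel hq.ne', Real.rpow_one]
  have hmemLp {F : α → ℝ} {q : ℝ} (hq : 0 < q) (hF : AEStronglyMeasurable F ν)
      (hF0 : ∀ x, 0 ≤ F x) (hFq : Integrable (fun x => F x ^ q) ν) :
      MemLp F (ENNReal.ofReal q) ν := by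
    rw [← integrable_norm_rpow_iff hF (by simpa using hq) ENNReal.ofReal_ne_top,
      ENNReal.toReal_ofReal hq.le]
    simpa only [Real.norm_of_nonneg (hF0 _)] using hFq
  have hw_meas := hw.aestronglyMeasurable
  have key := integral_mul_le_Lp_mul_Lq_of_nonneg hpq
    (f := fun x => w x ^ (1 / p)) (g := fun x => w x ^ (1 / r) * |g x|)
    (ae_of_all _ fun x => Real.rpow_nonneg (hw0 x) _)
    (ae_of_all _ fun x => mul_nonneg (Real.rpow_nonneg (hw0 x) _) (abs_nonneg _))
    (hmemLp hpq.pos (hw_meas.aemeasurable.pow_const _).aestronglyMeasurable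
      (fun x => Real.rpow_nonneg (hw0 x) _) (by simpa only [hrpow p hpq.pos] using hw))
    (hmemLp hpq.symm.pos
      ((hw_meas.aemeasurable.pow_const _).mul hg.aemeasurable.abs).aestronglyMeasurable
      (fun x => mul_nonneg (Real.rpow_nonneg (hw0 x) _) (abs_nonneg _))
      (by simpa only [Real.mul_rpow (Real.rpow_nonneg (hw0 _) _) (abs_nonneg _),
        hrpow r hpq.symm.pos] using hwg))
  have hsplit (x : α) : w x ^ (1 / p) * (w x ^ (1 / r) * |g x|) = w x * |g x| := by
    rw [← mul_assoc, ← Real.rpow_add' (hw0 x) (by simp [hpq.inv_add_inv_eq_one]),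
      one_div, one_div, hpq.inv_add_inv_eq_one, Real.rpow_one]
  simp only [hsplit, hrpow p hpq.pos, Real.mul_rpow (Real.rpow_nonneg (hw0 _) _) (abs_nonneg _),
    hrpow r hpq.symm.pos] at key
  rwa [show 1 - 1 / r = 1 / p by rw [one_div, one_div, ← hpq.one_sub_inv, sub_sub_cancel]]

theorem integral_abs_sub_mul_eq {φ : ℝ → ℝ} (hφ : Continuous φ) {a l b : ℝ} (hal : a ≤ l)
    (hlb : l ≤ b) :
    ∫ t in a..b, |t - l| * φ t = (∫ t in a..l, (l - t) * φ t) - ∫ t in l..b, (l - t) * φ t := by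
  have hint (c d : ℝ) : IntervalIntegrable (fun t => |t - l| * φ t) volume c d :=
    (by fun_prop : Continuous fun t => |t - l| * φ t).intervalIntegrable c d
  rw [← integral_add_adjacent_intervals (hint a l) (hint l b), sub_eq_add_neg,
    ← intervalIntegral.integral_neg]
  congr 1 <;> refine integral_congr fun t ht => ?_
  · rw [Set.uIcc_of_le hal] at ht
    simp only [abs_of_nonpos (sub_nonpos.2 ht.2), neg_sub]
  · rw [Set.uIcc_of_le hlb] at ht
    simp only [abs_of_nonneg (sub_nonneg.2 ht.1), ← neg_mul, neg_sub]

theorem integral_sub_mul_rpow {s : ℝ} (hs : 0 ≤ s) (c : ℝ) {a b : ℝ} (ha : 0 ≤ a) (hb : 0 ≤ b) :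
    ∫ t in a..b, (c - t) * t ^ s
      = c * (b ^ (s + 1) - a ^ (s + 1)) / (s + 1) - (b ^ (s + 2) - a ^ (s + 2)) / (s + 2) := by
  have hcont (q : ℝ) (hq : 0 ≤ q) : Continuous fun t : ℝ => t ^ q :=
    Real.continuous_rpow_const hq
  have hexpand : ∀ t ∈ Set.uIcc a b, (c - t) * t ^ s = c * t ^ s - t ^ (s + 1) := fun t ht => by
    rw [Real.rpow_add_one' ((le_min ha hb).trans ht.1) (by linarith)]
    ring
  rw [integral_congr hexpand, integral_sub (((hcont s hs).const_mul c).intervalIntegrable _ _)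
      ((hcont (s + 1) (by linarith)).intervalIntegrable _ _), intervalIntegral.integral_const_mul,
    integral_rpow (Or.inl (by linarith)), integral_rpow (Or.inl (by linarith))]
  ring_nf

theorem integral_abs_sub_mul_rpow {s : ℝ} (hs : 0 ≤ s) {l : ℝ} (hl : l ∈ Set.Icc (0:ℝ) 1) :
    ∫ t in (0:ℝ)..1, |t - l| * t ^ s
      = (2 * l ^ (s + 2) + s * (1 - l) - 2 * l + 1) / ((s + 1) * (s + 2)) := by
  rw [integral_abs_sub_mul_eq (Real.continuous_rpow_const hs) hl.1 hl.2,
    integral_sub_mul_rpow hs l le_rfl hl.1, integral_sub_mul_rpow hs l hl.1 zero_le_one,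
    Real.zero_rpow (by linarith), Real.zero_rpow (by linarith), Real.one_rpow, Real.one_rpow,
    Real.rpow_add_of_nonneg hl.1 hs zero_le_one, Real.rpow_add_of_nonneg hl.1 hs zero_le_two,
    Real.rpow_one, Real.rpow_two]
  field_simp
  ring

theorem integral_abs_sub_mul_two_sub_rpow {s : ℝ} (hs : 0 ≤ s) {l : ℝ}
    (hl : l ∈ Set.Icc (0:ℝ) 1) :
    ∫ t in (0:ℝ)..1, |t - l| * (2 - t) ^ s
      = (2 * (2 - l) ^ (s + 2) + (l - 1) * (s + 2 ^ (s + 2) + 2) + 2 ^ (s + 1) * s * l - 1)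
        / ((s + 1) * (s + 2)) := by
  have hreflect (t : ℝ) : |t - l| * (2 - t) ^ s = |(2 - t) - (2 - l)| * (2 - t) ^ s := by
    rw [abs_sub_comm, sub_sub_sub_cancel_left]
  simp only [hreflect]
  rw [integral_comp_sub_left (fun x => |x - (2 - l)| * x ^ s), show (2:ℝ) - 1 = 1 by norm_num,
    sub_zero, integral_abs_sub_mul_eq (Real.continuous_rpow_const hs) (by linarith [hl.2])
      (by linarith [hl.1]),
    integral_sub_mul_rpow hs _ zero_le_one (by linarith [hl.2]),
    integral_sub_mul_rpow hs _ (by linarith [hl.2]) zero_le_two, Real.one_rpow, Real.one_rpow]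
  simp only [Real.rpow_add_of_nonneg (by linarith [hl.2] : 0 ≤ 2 - l) hs zero_le_one,
    Real.rpow_add_of_nonneg (by linarith [hl.2] : 0 ≤ 2 - l) hs zero_le_two,
    Real.rpow_add_of_nonneg zero_le_two hs zero_le_one,
    Real.rpow_add_of_nonneg zero_le_two hs zero_le_two, Real.rpow_one, Real.rpow_two]
  field_simp
  ring

theorem integral_abs_sub {l : ℝ} (hl : l ∈ Set.Icc (0:ℝ) 1) :
    ∫ t in (0:ℝ)..1, |t - l| = (2 * l ^ 2 - 2 * l + 1) / 2 := by
  simpa using integral_abs_sub_mul_rpow le_rfl hl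

theorem integral_abs_sub_mul_endpoint_weights {s : ℝ} (hs : 0 ≤ s) {l : ℝ}
    (hl : l ∈ Set.Icc (0:ℝ) 1) (A B : ℝ) :
    ∫ t in (0:ℝ)..1, |t - l| * ((1 - t / 2) ^ s * A + (t / 2) ^ s * B)
      = ((2 * (2 - l) ^ (s + 2) + (l - 1) * (s + 2 ^ (s + 2) + 2) + 2 ^ (s + 1) * s * l - 1) * A
          + (2 * l ^ (s + 2) + s * (1 - l) - 2 * l + 1) * B) / (2 ^ s * ((s + 1) * (s + 2))) := by
  have hsplit : ∀ t ∈ Set.uIcc (0:ℝ) 1, |t - l| * ((1 - t / 2) ^ s * A + (t / 2) ^ s * B)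
      = A / 2 ^ s * (|t - l| * (2 - t) ^ s) + B / 2 ^ s * (|t - l| * t ^ s) := fun t ht => by
    rw [Set.uIcc_of_le zero_le_one] at ht
    rw [show 1 - t / 2 = (2 - t) / 2 by ring, Real.div_rpow (by linarith [ht.2]) zero_le_two,
      Real.div_rpow ht.1 zero_le_two]
    ring
  have hcont : Continuous fun t : ℝ => |t - l| * (2 - t) ^ s := by
    fun_prop (disch := exact fun _ => Or.inr hs)
  have hcont' : Continuous fun t : ℝ => |t - l| * t ^ s := by
    fun_prop (disch := exact fun _ => Or.inr hs)
  rw [integral_congr hsplit, integral_add ((hcont.const_mul _).intervalIntegrable _ _)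
      ((hcont'.const_mul _).intervalIntegrable _ _),
    intervalIntegral.integral_const_mul, intervalIntegral.integral_const_mul,
    integral_abs_sub_mul_two_sub_rpow hs hl, integral_abs_sub_mul_rpow hs hl]
  field_simp

theorem half_rpow_mul_div_rpow_eq {s r X Y : ℝ} (hs : 0 ≤ s) (hX : 0 ≤ X) (hY : 0 ≤ Y) :
    (X / 2) ^ (1 - 1 / r) * (Y / (2 ^ s * ((s + 1) * (s + 2)))) ^ (1 / r)
      = 1 / 2 * (1 / (2 ^ (s - 1) * (s + 1) * (s + 2))) ^ (1 / r)
        * (X ^ (1 - 1 / r) * Y ^ (1 / r)) := by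
  have hD : 0 < 2 ^ s * ((s + 1) * (s + 2)) := by positivity
  have hconst : 1 / (2 ^ (s - 1) * (s + 1) * (s + 2)) = 2 / (2 ^ s * ((s + 1) * (s + 2))) := by
    rw [Real.rpow_sub two_pos, Real.rpow_one]
    field_simp
  rw [hconst, Real.div_rpow hX zero_le_two, Real.div_rpow hY hD.le,
    Real.div_rpow zero_le_two hD.le, Real.rpow_sub two_pos, Real.rpow_one]
  field_simp

theorem abs_integral_sub_mul_le_s14 {g : ℝ → ℝ} {A B l s r : ℝ} (hl : l ∈ Set.Icc (0:ℝ) 1)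
    (hs : 0 ≤ s) (hr : 1 ≤ r) (hg : AEStronglyMeasurable g (volume.restrict (Set.Ioc 0 1)))
    (hgle : ∀ t ∈ Set.Ioc (0:ℝ) 1, |g t| ^ r ≤ (1 - t / 2) ^ s * A + (t / 2) ^ s * B) :
    |∫ t in (0:ℝ)..1, (t - l) * g t|
      ≤ (1 / 2) * (1 / (2 ^ (s - 1) * (s + 1) * (s + 2))) ^ (1 / r) *
        ((2 * l ^ 2 - 2 * l + 1) ^ (1 - 1 / r) *
          ((2 * (2 - l) ^ (s + 2) + (l - 1) * (s + 2 ^ (s + 2) + 2) + 2 ^ (s + 1) * s * l - 1) * A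
            + (2 * l ^ (s + 2) + s * (1 - l) - 2 * l + 1) * B) ^ (1 / r)) := by
  set Y := (2 * (2 - l) ^ (s + 2) + (l - 1) * (s + 2 ^ (s + 2) + 2) + 2 ^ (s + 1) * s * l - 1) * A
    + (2 * l ^ (s + 2) + s * (1 - l) - 2 * l + 1) * B
  set D : ℝ := 2 ^ s * ((s + 1) * (s + 2))
  have hD : 0 < D := by positivity
  have hw : Continuous fun t : ℝ => |t - l| := by fun_prop
  have hbound : IntegrableOn (fun t => |t - l| * ((1 - t / 2) ^ s * A + (t / 2) ^ s * B))
      (Set.Ioc 0 1) :=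
    (Continuous.intervalIntegrable (by fun_prop (disch := exact fun _ => Or.inr hs)) 0 1).1
  have hmono : ∀ t ∈ Set.Ioc (0:ℝ) 1,
      |t - l| * |g t| ^ r ≤ |t - l| * ((1 - t / 2) ^ s * A + (t / 2) ^ s * B) :=
    fun t ht => mul_le_mul_of_nonneg_left (hgle t ht) (abs_nonneg _)
  have hwg : IntegrableOn (fun t => |t - l| * |g t| ^ r) (Set.Ioc 0 1) := by
    refine hbound.mono' ((hw.aemeasurable.mul
      (hg.aemeasurable.abs.pow_const r)).aestronglyMeasurable) ?_
    filter_upwards [ae_restrict_mem measurableSet_Ioc] with t ht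
    rw [Real.norm_of_nonneg (by positivity)]
    exact hmono t ht
  have hwg_le : ∫ t in Set.Ioc 0 1, |t - l| * |g t| ^ r ≤ Y / D := by
    rw [← integral_abs_sub_mul_endpoint_weights hs hl, integral_of_le zero_le_one]
    exact setIntegral_mono_on hwg hbound measurableSet_Ioc hmono
  have hY : 0 ≤ Y := by
    have := (integral_nonneg fun t =>
      mul_nonneg (abs_nonneg _) (Real.rpow_nonneg (abs_nonneg (g t)) r)).trans hwg_le
    exact (div_nonneg_iff.1 this).elim (·.1) fun h => absurd h.2 (not_le.2 hD)
  have hX : 0 ≤ 2 * l ^ 2 - 2 * l + 1 := by nlinarith [sq_nonneg (2 * l - 1)]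
  have hr_inv : 0 ≤ 1 / r := one_div_nonneg.2 (by linarith)
  calc |∫ t in (0:ℝ)..1, (t - l) * g t|
      ≤ ∫ t in Set.Ioc 0 1, |t - l| * |g t| := by
        rw [integral_of_le zero_le_one]
        simp only [← abs_mul]
        exact MeasureTheory.abs_integral_le_integral_abs
    _ ≤ (∫ t in Set.Ioc 0 1, |t - l|) ^ (1 - 1 / r)
          * (∫ t in Set.Ioc 0 1, |t - l| * |g t| ^ r) ^ (1 / r) :=
        integral_mul_abs_le_weight_mul_Lp hr (fun _ => abs_nonneg _)
          (hw.intervalIntegrable 0 1).1 hg hwg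
    _ ≤ ((2 * l ^ 2 - 2 * l + 1) / 2) ^ (1 - 1 / r) * (Y / D) ^ (1 / r) := by
        rw [← integral_of_le zero_le_one, integral_abs_sub hl]
        exact mul_le_mul_of_nonneg_left (Real.rpow_le_rpow (integral_nonneg fun t =>
          mul_nonneg (abs_nonneg _) (Real.rpow_nonneg (abs_nonneg _) _)) hwg_le hr_inv)
          (Real.rpow_nonneg (div_nonneg hX zero_le_two) _)
    _ = _ := half_rpow_mul_div_rpow_eq hs hX hY

theorem IntervalIntegrable.comp_add_sub_mul {f : ℝ → ℝ} {a b : ℝ}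
    (hf : IntervalIntegrable f volume a b) :
    IntervalIntegrable (fun t => f (a + (b - a) * t)) volume 0 1 := by
  rcases eq_or_ne b a with rfl | hba
  · simp
  simpa [sub_ne_zero.2 hba] using (hf.comp_add_left a).comp_mul_left (c := b - a)

theorem add_sub_mul_mem_uIcc {a b t : ℝ} (ht : t ∈ Set.Icc (0:ℝ) 1) :
    a + (b - a) * t ∈ Set.uIcc a b := by
  rw [← segment_eq_uIcc, show a + (b - a) * t = AffineMap.lineMap a b t by
    rw [AffineMap.lineMap_apply_ring']; ring]
  exact lineMap_mem_segment ℝ a b ht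

theorem sub_mul_integral_sub_mul_deriv {f f' : ℝ → ℝ} {a b : ℝ} (l : ℝ) (hab : a ≠ b)
    (hd : ∀ x ∈ Set.uIcc a b, HasDerivAt f (f' x) x) (hint : IntervalIntegrable f' volume a b) :
    (b - a) * ∫ t in (0:ℝ)..1, (t - l) * f' (a + (b - a) * t)
      = (1 - l) * f b + l * f a - (∫ x in a..b, f x) / (b - a) := by
  have hba : b - a ≠ 0 := sub_ne_zero.2 hab.symm
  have hderiv : ∀ t ∈ Set.uIcc (0:ℝ) 1,
      HasDerivAt (fun t => f (a + (b - a) * t)) (f' (a + (b - a) * t) * (b - a)) t :=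
    fun t ht => by
      rw [Set.uIcc_of_le zero_le_one] at ht
      have h := (hd _ (add_sub_mul_mem_uIcc ht)).comp t
        (((hasDerivAt_id t).const_mul (b - a)).const_add a)
      rw [mul_one] at h
      exact h
  calc (b - a) * ∫ t in (0:ℝ)..1, (t - l) * f' (a + (b - a) * t)
      = ∫ t in (0:ℝ)..1, (t - l) * (f' (a + (b - a) * t) * (b - a)) := by
        rw [← intervalIntegral.integral_const_mul]
        congr 1 with t
        ring
    _ = (1 - l) * f b + l * f a - ∫ t in (0:ℝ)..1, f (a + (b - a) * t) := by
        rw [integral_mul_deriv_eq_deriv_mul (fun t _ => (hasDerivAt_id' t).sub_const l) hderiv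
          intervalIntegrable_const (hint.comp_add_sub_mul.mul_const _)]
        simp only [one_mul, mul_one, mul_zero, add_zero, add_sub_cancel, zero_sub]
        ring
    _ = _ := by
        rw [integral_comp_add_mul _ hba]
        simp only [mul_zero, add_zero, mul_one, add_sub_cancel, smul_eq_mul]
        field_simp

theorem SConvexSecond.apply_add_mul_le {s u v : ℝ} {g : ℝ → ℝ} (hg : SConvexSecond s u v g)
    {x y t : ℝ} (hx : x ∈ Set.Icc u v) (hy : y ∈ Set.Icc u v) (ht : t ∈ Set.Icc (0:ℝ) 1) :
    g (x + ((x + y) / 2 - x) * t) ≤ (1 - t / 2) ^ s * g x + (t / 2) ^ s * g y := by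
  have h := hg x hx y hy (1 - t / 2) ⟨by linarith [ht.2], by linarith [ht.1]⟩
  rw [sub_sub_cancel] at h
  convert h using 2
  ring

theorem endpoint_midpoint_combination_sub_average_eq {f f' : ℝ → ℝ} {u v : ℝ} (l m : ℝ)
    (huv : u < v) (hd : ∀ x ∈ Set.Icc u v, HasDerivAt f (f' x) x)
    (hint : IntervalIntegrable f' volume u v) :
    (l * f u + m * f v) / 2 + ((2 - l - m) / 2) * f ((u + v) / 2)
        - (1 / (v - u)) * ∫ x in u..v, f x
      = (v - u) / 4 * ((∫ t in (0:ℝ)..1, (t - l) * f' (u + ((u + v) / 2 - u) * t))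
          - ∫ t in (0:ℝ)..1, (t - m) * f' (v + ((u + v) / 2 - v) * t)) := by
  have hu_mem : u ∈ Set.Icc u v := ⟨le_rfl, huv.le⟩
  have hv_mem : v ∈ Set.Icc u v := ⟨huv.le, le_rfl⟩
  have hmid_mem : (u + v) / 2 ∈ Set.Icc u v := ⟨by linarith, by linarith⟩
  have hd' {x y : ℝ} (hx : x ∈ Set.Icc u v) (hy : y ∈ Set.Icc u v) :
      ∀ z ∈ Set.uIcc x y, HasDerivAt f (f' z) z :=
    fun z hz => hd z (Set.uIcc_subset_Icc hx hy hz)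
  have hint' {x y : ℝ} (hx : x ∈ Set.Icc u v) (hy : y ∈ Set.Icc u v) :
      IntervalIntegrable f' volume x y :=
    hint.mono_set (by rw [Set.uIcc_of_le huv.le]; exact Set.uIcc_subset_Icc hx hy)
  have hf_int {x y : ℝ} (hx : x ∈ Set.Icc u v) (hy : y ∈ Set.Icc u v) :
      IntervalIntegrable f volume x y :=
    ContinuousOn.intervalIntegrable fun z hz => (hd' hx hy z hz).continuousAt.continuousWithinAt
  have hP := sub_mul_integral_sub_mul_deriv l (by linarith : u ≠ (u + v) / 2)
    (hd' hu_mem hmid_mem) (hint' hu_mem hmid_mem)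
  have hQ := sub_mul_integral_sub_mul_deriv m (by linarith : v ≠ (u + v) / 2)
    (hd' hv_mem hmid_mem) (hint' hv_mem hmid_mem)
  generalize (∫ t in (0:ℝ)..1, (t - l) * f' (u + ((u + v) / 2 - u) * t)) = P at hP ⊢
  generalize (∫ t in (0:ℝ)..1, (t - m) * f' (v + ((u + v) / 2 - v) * t)) = Q at hQ ⊢
  rw [← integral_add_adjacent_intervals (hf_int hu_mem hmid_mem) (hf_int hmid_mem hv_mem)]
  rw [show (u + v) / 2 - u = (v - u) / 2 by ring] at hP
  rw [integral_symm ((u + v) / 2) v, show (u + v) / 2 - v = -((v - u) / 2) by ring] at hQ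
  have hvu : v - u ≠ 0 := by linarith
  field_simp at hP hQ ⊢
  linear_combination (-2) * hP - 2 * hQ

theorem stmt_14_general (f f' : ℝ → ℝ) (u v l m r s : ℝ) (huv : u < v)
    (hl : l ∈ Set.Icc (0:ℝ) 1) (hm : m ∈ Set.Icc (0:ℝ) 1)
    (hs : s ∈ Set.Ioc (0:ℝ) 1) (hr : 1 ≤ r)
    (hd : ∀ x ∈ Set.Icc u v, HasDerivAt f (f' x) x)
    (hint : IntervalIntegrable f' volume u v)
    (hsc : SConvexSecond s u v (fun x => |f' x| ^ r))
    (E L I F : ℝ)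
    (hE : E = 2 * (2 - l) ^ (s + 2) + (l - 1) * (s + 2 ^ (s + 2) + 2) + 2 ^ (s + 1) * s * l - 1)
    (hL : L = 2 * l ^ (s + 2) + s * (1 - l) - 2 * l + 1)
    (hI : I = 2 * m ^ (s + 2) + s * (1 - m) - 2 * m + 1)
    (hF : F = 2 * (2 - m) ^ (s + 2) + (m - 1) * (s + 2 ^ (s + 2) + 2) + 2 ^ (s + 1) * s * m - 1) :
    |(l * f u + m * f v) / 2 + ((2 - l - m) / 2) * f ((u + v) / 2)
        - (1 / (v - u)) * ∫ x in u..v, f x|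
      ≤ ((v - u) / 8) * (1 / (2 ^ (s - 1) * (s + 1) * (s + 2))) ^ (1 / r) *
          ((2 * l ^ 2 - 2 * l + 1) ^ (1 - 1 / r) *
              (E * |f' u| ^ r + L * |f' v| ^ r) ^ (1 / r)
            + (2 * m ^ 2 - 2 * m + 1) ^ (1 - 1 / r) *
              (I * |f' u| ^ r + F * |f' v| ^ r) ^ (1 / r)) := by
  subst hE hL hI hF
  have hu_mem : u ∈ Set.Icc u v := ⟨le_rfl, huv.le⟩
  have hv_mem : v ∈ Set.Icc u v := ⟨huv.le, le_rfl⟩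
  have hint_half {x : ℝ} (hx : x ∈ Set.Icc u v) : IntervalIntegrable f' volume x ((u + v) / 2) :=
    hint.mono_set (by
      rw [Set.uIcc_of_le huv.le]
      exact Set.uIcc_subset_Icc hx ⟨by linarith, by linarith⟩)
  have hPle := abs_integral_sub_mul_le_s14 hl hs.1.le hr
    (hint_half hu_mem).comp_add_sub_mul.1.aestronglyMeasurable
    fun t ht => hsc.apply_add_mul_le hu_mem hv_mem (Set.Ioc_subset_Icc_self ht)
  have hQle := abs_integral_sub_mul_le_s14 hm hs.1.le hr
    (hint_half hv_mem).comp_add_sub_mul.1.aestronglyMeasurable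
    fun t ht => by
      simpa only [add_comm v u] using
        hsc.apply_add_mul_le hv_mem hu_mem (Set.Ioc_subset_Icc_self ht)
  rw [endpoint_midpoint_combination_sub_average_eq l m huv hd hint, abs_mul,
    abs_of_pos (by linarith : 0 < (v - u) / 4)]
  exact (mul_le_mul_of_nonneg_left ((abs_sub _ _).trans (add_le_add hPle hQle))
    (by linarith)).trans_eq (by ring_nf)

theorem stmt_14 (f f' : ℝ → ℝ) (u v l m r s : ℝ) (hu : 0 ≤ u) (huv : u < v)
    (hl : l ∈ Set.Icc (0:ℝ) 1) (hm : m ∈ Set.Icc (0:ℝ) 1)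
    (hs : s ∈ Set.Ioc (0:ℝ) 1) (hr : 1 ≤ r)
    (hd : ∀ x ∈ Set.Icc u v, HasDerivAt f (f' x) x)
    (hint : IntervalIntegrable f' volume u v)
    (hsc : SConvexSecond s u v (fun x => |f' x| ^ r))
    (E L I F : ℝ)
    (hE : E = 2 * (2 - l) ^ (s + 2) + (l - 1) * (s + 2 ^ (s + 2) + 2) + 2 ^ (s + 1) * s * l - 1)
    (hL : L = 2 * l ^ (s + 2) + s * (1 - l) - 2 * l + 1)
    (hI : I = 2 * m ^ (s + 2) + s * (1 - m) - 2 * m + 1)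
    (hF : F = 2 * (2 - m) ^ (s + 2) + (m - 1) * (s + 2 ^ (s + 2) + 2) + 2 ^ (s + 1) * s * m - 1) :
    |(l * f u + m * f v) / 2 + ((2 - l - m) / 2) * f ((u + v) / 2)
        - (1 / (v - u)) * ∫ x in u..v, f x|
      ≤ ((v - u) / 8) * (1 / (2 ^ (s - 1) * (s + 1) * (s + 2))) ^ (1 / r) *
          ((2 * l ^ 2 - 2 * l + 1) ^ (1 - 1 / r) *
              (E * |f' u| ^ r + L * |f' v| ^ r) ^ (1 / r)
            + (2 * m ^ 2 - 2 * m + 1) ^ (1 - 1 / r) *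
              (I * |f' u| ^ r + F * |f' v| ^ r) ^ (1 / r)) :=
  stmt_14_general f f' u v l m r s huv hl hm hs hr hd hint hsc E L I F hE hL hI hF
end

section
/- Let 0 < u < v. Then |(1/3) A(u⁻¹, v⁻¹) + (2/3) A⁻¹(u,v) - L⁻¹(u,v)| ≤ (5/36)(v-u) A(u⁻², v⁻²), where A(a,b) = (a+b)/2 is the arithmetic mean, A⁻¹(u,v) = 2/(u+v), and L(u,v) = (v-u)/(ln v - ln u) is the logarithmic mean, so L⁻¹(u,v) = (ln v - ln u)/(v-u). -/
/-!
In reciprocal form the classical bounds `G ≤ L ≤ A` for the logarithmic mean read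
`2 / (u + v) ≤ L⁻¹ ≤ (u⁻¹ + v⁻¹) / 2`; the lower one is the first term of the series
`log x = 2 ∑ ((x - 1) / (x + 1)) ^ (2k + 1) / (2k + 1)`, the upper one is `log x ≤ sinh (log x)`.
The left-hand expression is the `1/3 : 2/3` combination of the two endpoints of this interval,
so its distance to `L⁻¹` is at most `2/3` of the interval's length `(v - u)² / (2uv(u + v))`.
Comparing with the right-hand side reduces to the cubic inequality
`24uv(v - u) ≤ 5(u² + v²)(u + v)`.
-/

open Real

theorem two_mul_sub_one_div_add_one_le_log {x : ℝ} (hx : 1 ≤ x) :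
    2 * (x - 1) / (x + 1) ≤ log x := by
  have hx₀ : 0 ≤ x - 1 := sub_nonneg.2 hx
  have hsum := hasSum_log_one_add hx₀
  rw [add_sub_cancel] at hsum
  have hx₂ : x - 1 + 2 = x + 1 := by ring
  simpa [hx₂, mul_div_assoc] using le_hasSum hsum 0 fun k _ ↦ by positivity

theorem log_le_sub_inv_div_two {x : ℝ} (hx : 1 ≤ x) : log x ≤ (x - x⁻¹) / 2 := by
  rw [← sinh_log (by positivity)]
  exact self_le_sinh_iff.2 (log_nonneg hx)

section LogarithmicMean

variable {u v : ℝ}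

theorem two_div_add_le_log_sub_log_div_sub (hu : 0 < u) (huv : u < v) :
    2 / (u + v) ≤ (log v - log u) / (v - u) := by
  have hv : 0 < v := hu.trans huv
  have h := two_mul_sub_one_div_add_one_le_log ((one_le_div hu).2 huv.le)
  rw [log_div hv.ne' hu.ne'] at h
  rw [le_div_iff₀ (sub_pos.2 huv)]
  calc 2 / (u + v) * (v - u) = 2 * (v / u - 1) / (v / u + 1) := by field_simp; ring
    _ ≤ log v - log u := h

theorem log_sub_log_div_sub_le_inv_add_inv_div_two (hu : 0 < u) (huv : u < v) :
    (log v - log u) / (v - u) ≤ (u⁻¹ + v⁻¹) / 2 := by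
  have hv : 0 < v := hu.trans huv
  have h := log_le_sub_inv_div_two ((one_le_div hu).2 huv.le)
  rw [log_div hv.ne' hu.ne'] at h
  rw [div_le_iff₀ (sub_pos.2 huv)]
  calc log v - log u ≤ (v / u - (v / u)⁻¹) / 2 := h
    _ = (u⁻¹ + v⁻¹) / 2 * (v - u) := by field_simp; ring

theorem inv_add_inv_div_two_sub_two_div_add (hu : u ≠ 0) (hv : v ≠ 0) (huv : u + v ≠ 0) :
    (u⁻¹ + v⁻¹) / 2 - 2 / (u + v) = (v - u) ^ 2 / (2 * u * v * (u + v)) := by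
  field_simp
  ring

end LogarithmicMean

theorem stmt_19 (u v : ℝ) (hu : 0 < u) (huv : u < v) :
    |(1 / 3) * ((u⁻¹ + v⁻¹) / 2) + (2 / 3) * (2 / (u + v))
        - (Real.log v - Real.log u) / (v - u)|
      ≤ (5 / 36) * (v - u) * ((u⁻¹ ^ 2 + v⁻¹ ^ 2) / 2) := by
  have hv : 0 < v := hu.trans huv
  have hlo := two_div_add_le_log_sub_log_div_sub hu huv
  have hhi := log_sub_log_div_sub_le_inv_add_inv_div_two hu huv
  have hcubic : 24 * u * v * (v - u) ≤ 5 * (u ^ 2 + v ^ 2) * (u + v) := by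
    nlinarith [sq_nonneg (10 * v - 19 * u), mul_pos hu hv, mul_pos hu hu]
  calc _ ≤ (2 / 3) * ((u⁻¹ + v⁻¹) / 2 - 2 / (u + v)) := by
        rw [abs_le]; constructor <;> linarith
    _ = (v - u) / (3 * u * v * (u + v)) * (v - u) := by
        rw [inv_add_inv_div_two_sub_two_div_add hu.ne' hv.ne' (by positivity)]
        field_simp
    _ ≤ 5 * (u ^ 2 + v ^ 2) / (72 * u ^ 2 * v ^ 2) * (v - u) := by
        gcongr ?_ * _
        rw [div_le_div_iff₀ (by positivity) (by positivity)]
        nlinarith [mul_pos hu hv]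
    _ = _ := by field_simp; ring
end
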